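/- Let x(t) = (A₀ + A₁ t) sin(ωt + φ) with ω > 0, g : [0,1] → ℝ continuous, T > 0. Define A = ∫_0^1 g(τ) x(Tτ) dτ, B = 2∫_0^1 g(τ) x''(Tτ) dτ, C = ∫_0^1 g(τ) x⁗(Tτ) dτ. Assume A ≠ 0 and ω A₁ ∫_0^1 g(τ) cos(ωTτ + φ) dτ ≥ 0. Then ω² = (-B + √(B² - 4AC)) / (2A). -/

import Mathlib

open Real intervalIntegral

theorem frequency_from_quadratic_root (A₀ A₁ ω φ T : ℝ) (hω : 0 < ω) (hT : 0 < T)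
    (g : ℝ → ℝ) (hg : ContinuousOn g (Set.Icc 0 1))
    (x : ℝ → ℝ) (hx : x = fun s : ℝ => (A₀ + A₁ * s) * Real.sin (ω * s + φ))
    (A B C : ℝ)
    (hA : A = ∫ τ in (0 : ℝ)..1, g τ * x (T * τ))
    (hB : B = 2 * ∫ τ in (0 : ℝ)..1, g τ * iteratedDeriv 2 x (T * τ))
    (hC : C = ∫ τ in (0 : ℝ)..1, g τ * iteratedDeriv 4 x (T * τ))
    (hA0 : A ≠ 0)
    (hsign : 0 ≤ ω * A₁ * ∫ τ in (0 : ℝ)..1, g τ * Real.cos (ω * T * τ + φ)) :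
    ω ^ 2 = (-B + Real.sqrt (B ^ 2 - 4 * A * C)) / (2 * A) := by
  have key : ∀ a b c d : ℝ, deriv (fun s => (a + b * s) * Real.sin (ω * s + φ) + (c + d * s) * Real.cos (ω * s + φ)) = fun s => ((b - ω * c) + (-(ω * d)) * s) * Real.sin (ω * s + φ) + ((ω * a + d) + (ω * b) * s) * Real.cos (ω * s + φ) := by
    intro a b c d
    funext s
    have h1 : HasDerivAt (fun s : ℝ => ω * s + φ) ω s := by
      simpa using ((hasDerivAt_id s).const_mul ω).add_const φ
    have hsin : HasDerivAt (fun s : ℝ => Real.sin (ω * s + φ)) (Real.cos (ω * s + φ) * ω) s :=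
      h1.sin
    have hcos : HasDerivAt (fun s : ℝ => Real.cos (ω * s + φ)) (-Real.sin (ω * s + φ) * ω) s :=
      h1.cos
    have hl1 : HasDerivAt (fun s : ℝ => a + b * s) b s := by
      simpa using ((hasDerivAt_id s).const_mul b).const_add a
    have hl2 : HasDerivAt (fun s : ℝ => c + d * s) d s := by
      simpa using ((hasDerivAt_id s).const_mul d).const_add c
    have H := ((hl1.mul hsin).add (hl2.mul hcos)).deriv
    refine H.trans ?_; ring
  have hx0 : x = fun s => (A₀ + A₁ * s) * Real.sin (ω * s + φ) + ((0:ℝ) + 0 * s) * Real.cos (ω * s + φ) := by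
    rw [hx]; funext s; ring
  have e2 : ∀ s, iteratedDeriv 2 x s = -(ω ^ 2) * x s + 2 * ω * A₁ * Real.cos (ω * s + φ) := by
    have h2 : iteratedDeriv 2 x = deriv (deriv x) := by
      rw [iteratedDeriv_succ, iteratedDeriv_one]
    intro s
    rw [h2, hx0, key, key]
    beta_reduce
    ring
  have e4 : ∀ s, iteratedDeriv 4 x s = ω ^ 4 * x s - 4 * ω ^ 3 * A₁ * Real.cos (ω * s + φ) := by
    have h4 : iteratedDeriv 4 x = deriv (deriv (deriv (deriv x))) := by
      rw [iteratedDeriv_succ, iteratedDeriv_succ, iteratedDeriv_succ, iteratedDeriv_one]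
    intro s
    rw [h4, hx0, key, key, key, key]
    beta_reduce
    ring
  have hgint : ∀ f : ℝ → ℝ, Continuous f →
      IntervalIntegrable (fun τ => g τ * f τ) MeasureTheory.volume 0 1 := by
    intro f hf
    apply ContinuousOn.intervalIntegrable
    rw [Set.uIcc_of_le (zero_le_one)]
    exact hg.mul hf.continuousOn
  have hxc : Continuous fun τ : ℝ => x (T * τ) := by
    rw [hx]; fun_prop
  have hcc : Continuous fun τ : ℝ => Real.cos (ω * T * τ + φ) := by fun_prop
  have int1 := hgint _ hxc
  have int2 := hgint _ hcc
  set I := ∫ τ in (0:ℝ)..1, g τ * Real.cos (ω * T * τ + φ) with hI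
  have hBval : B = -2 * ω ^ 2 * A + 4 * ω * A₁ * I := by
    rw [hB, hA, hI]
    have heq : (fun τ => g τ * iteratedDeriv 2 x (T * τ)) =
        fun τ => (-(ω ^ 2)) * (g τ * x (T * τ)) + (2 * ω * A₁) * (g τ * Real.cos (ω * T * τ + φ)) := by
      funext τ
      rw [e2, ← mul_assoc]; ring
    rw [heq, intervalIntegral.integral_add (int1.const_mul _) (int2.const_mul _),
      intervalIntegral.integral_const_mul, intervalIntegral.integral_const_mul]
    ring
  have hCval : C = ω ^ 4 * A - 4 * ω ^ 3 * A₁ * I := by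
    rw [hC, hA, hI]
    have heq : (fun τ => g τ * iteratedDeriv 4 x (T * τ)) =
        fun τ => (ω ^ 4) * (g τ * x (T * τ)) + (-(4 * ω ^ 3 * A₁)) * (g τ * Real.cos (ω * T * τ + φ)) := by
      funext τ
      rw [e4, ← mul_assoc]; ring
    rw [heq, intervalIntegral.integral_add (int1.const_mul _) (int2.const_mul _),
      intervalIntegral.integral_const_mul, intervalIntegral.integral_const_mul]
    ring
  have hD : 0 ≤ ω * A₁ * I := hsign
  have hdisc : B ^ 2 - 4 * A * C = (4 * (ω * A₁ * I)) ^ 2 := by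
    rw [hBval, hCval]; ring
  rw [hdisc, Real.sqrt_sq (by linarith), hBval]
  field_simp
  ring
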